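/- Let C' = 2·co(γ₁ ∪ γ₂ ∪ γ₃ ∪ γ₄) + (1/2, 0, 1/2) ⊆ ℝ³, K = cone({1} × C') ⊆ ℝ⁴, F = cone({1} × (2·co(γ₃ ∪ γ₄) + (1/2, 0, 1/2))), and q = (−1, 0, −1, 2). Then q ∈ F°, i.e., ⟨q, z⟩ ≤ 0 for all z ∈ F. In particular, ⟨q, (1, 2γ₃(t) + c)⟩ = 2(cos t − 1) ≤ 0 and ⟨q, (1, 2γ₄(t) + c)⟩ = −2 sin t ≤ 0 for all t ∈ [0, π/4]. -/

import Mathlib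

open Real Pointwise RealInnerProductSpace

/-- The conic hull: all nonnegative multiples of elements of `S`. -/
def coneHull {E : Type*} [AddCommMonoid E] [Module ℝ E] (S : Set E) : Set E :=
  {y | ∃ c : ℝ, 0 ≤ c ∧ ∃ x ∈ S, y = c • x}

noncomputable def vec3 (a b c : ℝ) : EuclideanSpace ℝ (Fin 3) :=
  (WithLp.equiv 2 (Fin 3 → ℝ)).symm ![a, b, c]

noncomputable def vec4 (a b c d : ℝ) : EuclideanSpace ℝ (Fin 4) :=
  (WithLp.equiv 2 (Fin 4 → ℝ)).symm ![a, b, c, d]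

/-- The point `(1, x) ∈ ℝ⁴` for `x ∈ ℝ³`. -/
noncomputable def liftPt (x : EuclideanSpace ℝ (Fin 3)) : EuclideanSpace ℝ (Fin 4) :=
  (WithLp.equiv 2 (Fin 4 → ℝ)).symm (Fin.cons 1 x)

noncomputable def γ₁ (t : ℝ) : EuclideanSpace ℝ (Fin 3) := vec3 0 (-sin t) (cos t - 1)
noncomputable def γ₂ (t : ℝ) : EuclideanSpace ℝ (Fin 3) := vec3 0 (cos t - 1) (-sin t)
noncomputable def γ₃ (t : ℝ) : EuclideanSpace ℝ (Fin 3) := vec3 (-sin t) (1 - cos t) 0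
noncomputable def γ₄ (t : ℝ) : EuclideanSpace ℝ (Fin 3) := vec3 (cos t - 1) (sin t) 0

/-- The translation vector `c = (1/2, 0, 1/2)`. -/
noncomputable def cvec : EuclideanSpace ℝ (Fin 3) := vec3 (1 / 2) 0 (1 / 2)

/-- The face `F = cone({1} × (2 · co(γ₃ ∪ γ₄) + c)) ⊆ ℝ⁴`. -/
noncomputable def Fface : Set (EuclideanSpace ℝ (Fin 4)) :=
  coneHull {z | ∃ x ∈ (fun w => (2 : ℝ) • w + cvec) ''
    convexHull ℝ (γ₃ '' Set.Icc (0 : ℝ) (π / 4) ∪ γ₄ '' Set.Icc (0 : ℝ) (π / 4)),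
    z = liftPt x}

/-- The set `C' = 2 · co(γ₁ ∪ γ₂ ∪ γ₃ ∪ γ₄) + c ⊆ ℝ³`. -/
noncomputable def C' : Set (EuclideanSpace ℝ (Fin 3)) :=
  (fun w => (2 : ℝ) • w + cvec) ''
    convexHull ℝ (γ₁ '' Set.Icc (0 : ℝ) (π / 4) ∪ γ₂ '' Set.Icc (0 : ℝ) (π / 4) ∪
      γ₃ '' Set.Icc (0 : ℝ) (π / 4) ∪ γ₄ '' Set.Icc (0 : ℝ) (π / 4))

/-- The cone `K = cone({1} × C') ⊆ ℝ⁴`. -/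
noncomputable def Kcone : Set (EuclideanSpace ℝ (Fin 4)) :=
  coneHull {z | ∃ x ∈ C', z = liftPt x}

/-!
On `{1} × (2w + c)` the functional `⟪q, ·⟫` equals `2 (2 w₂ - w₁)`, so `q ∈ F°` amounts to
`co(γ₃ ∪ γ₄)` lying in the half-space `2 w₂ ≤ w₁`. Being convex, the half-space contains the hull
as soon as it contains both arcs, and there `w₂ = 0` while `w₁` is `1 - cos t` or `sin t`,
both nonnegative for `t ∈ [0, π/4]`.
-/

@[simp] lemma vec3_apply_one (a b c : ℝ) : vec3 a b c 1 = b := rfl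

@[simp] lemma vec3_apply_two (a b c : ℝ) : vec3 a b c 2 = c := rfl

lemma inner_vec4_liftPt (a b c d : ℝ) (x : EuclideanSpace ℝ (Fin 3)) :
    ⟪vec4 a b c d, liftPt x⟫ = a + b * x 0 + c * x 1 + d * x 2 := by
  simp [vec4, liftPt, PiLp.inner_apply, Fin.sum_univ_succ]
  ring

lemma inner_liftPt_two_smul_add_cvec (w : EuclideanSpace ℝ (Fin 3)) :
    ⟪vec4 (-1) 0 (-1) 2, liftPt ((2 : ℝ) • w + cvec)⟫ = 2 * (2 * w 2 - w 1) := by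
  simp only [inner_vec4_liftPt, PiLp.add_apply, PiLp.smul_apply, smul_eq_mul, cvec,
    vec3_apply_one, vec3_apply_two]
  ring

lemma convex_halfSpace_two_mul_apply_two_le_apply_one :
    Convex ℝ {v : EuclideanSpace ℝ (Fin 3) | 2 * v 2 ≤ v 1} := by
  intro a ha b hb s t hs ht _
  simp only [Set.mem_ofPred_eq, PiLp.add_apply, PiLp.smul_apply, smul_eq_mul] at ha hb ⊢
  nlinarith

lemma convexHull_arcs_subset_halfSpace :
    convexHull ℝ (γ₃ '' Set.Icc (0 : ℝ) (π / 4) ∪ γ₄ '' Set.Icc (0 : ℝ) (π / 4)) ⊆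
      {v | 2 * v 2 ≤ v 1} := by
  refine convexHull_min ?_ convex_halfSpace_two_mul_apply_two_le_apply_one
  rintro v (⟨t, -, rfl⟩ | ⟨t, ht, rfl⟩)
  · simpa [γ₃] using cos_le_one t
  · simpa [γ₄] using sin_nonneg_of_nonneg_of_le_pi ht.1 (by linarith [ht.2, pi_pos])

theorem stmt_19 :
    (∀ z ∈ Fface, ⟪vec4 (-1) 0 (-1) 2, z⟫ ≤ 0) ∧
    ∀ t ∈ Set.Icc (0 : ℝ) (π / 4),
      (⟪vec4 (-1) 0 (-1) 2, liftPt ((2 : ℝ) • γ₃ t + cvec)⟫ = 2 * (cos t - 1) ∧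
        2 * (cos t - 1) ≤ 0) ∧
      (⟪vec4 (-1) 0 (-1) 2, liftPt ((2 : ℝ) • γ₄ t + cvec)⟫ = -(2 * sin t) ∧
        -(2 * sin t) ≤ 0) := by
  refine ⟨?_, fun t ht => ⟨⟨?_, ?_⟩, ⟨?_, ?_⟩⟩⟩
  · rintro _ ⟨r, hr, _, ⟨_, ⟨w, hw, rfl⟩, rfl⟩, rfl⟩
    have hw' : 2 * w 2 ≤ w 1 := convexHull_arcs_subset_halfSpace hw
    rw [real_inner_smul_right, inner_liftPt_two_smul_add_cvec]
    exact mul_nonpos_of_nonneg_of_nonpos hr (by linarith)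
  · rw [inner_liftPt_two_smul_add_cvec]
    simp only [γ₃, vec3_apply_one, vec3_apply_two]
    ring
  · linarith [cos_le_one t]
  · rw [inner_liftPt_two_smul_add_cvec]
    simp only [γ₄, vec3_apply_one, vec3_apply_two]
    ring
  · linarith [sin_nonneg_of_nonneg_of_le_pi ht.1 (by linarith [ht.2, pi_pos])]
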